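/- arXiv:1501.02400 — 3 statements merged into one kernel-verified Lean document; each statement's English description precedes it below -/
import Mathlib

section
/- Let E and F be filters on ω, let f : ω → ω witness F ≤_RK E, and let H be an F^{<ω}-positive set of finite subsets of ω. Then the set of finite sets a ⊆ ω such that f[a] ∈ H is E^{<ω}-positive. -/
/-- A set `X ⊆ [ω]^{<ω}` is `F^{<ω}`-positive: for every `A ∈ F` some `a ∈ X`
is contained in `A`. -/
def FinPos (F : Filter ℕ) (X : Set (Finset ℕ)) : Prop :=
  ∀ A ∈ F, ∃ a ∈ X, (↑a : Set ℕ) ⊆ A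

/-- If `f` witnesses `F ≤_RK E` and `H` is `F^{<ω}`-positive, then
`{a : f[a] ∈ H}` is `E^{<ω}`-positive. -/
theorem stmt4 (E F : Filter ℕ) [E.NeBot] [F.NeBot]
    (hE : E ≤ Filter.cofinite) (hF : F ≤ Filter.cofinite)
    (f : ℕ → ℕ) (hf : ∀ A : Set ℕ, A ∈ F ↔ f ⁻¹' A ∈ E)
    (H : Set (Finset ℕ)) (hH : FinPos F H) :
    FinPos E {a : Finset ℕ | a.image f ∈ H} := by
  intro A hA
  have hfA : f '' A ∈ F := by
    rw [hf]
    exact E.sets_of_superset hA (Set.subset_preimage_image f A)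
  obtain ⟨b, hbH, hbsub⟩ := hH (f '' A) hfA
  classical
  have hch : ∀ n ∈ b, ∃ x, x ∈ A ∧ f x = n := by
    intro n hn
    obtain ⟨x, hx, hfx⟩ := hbsub hn
    exact ⟨x, hx, hfx⟩
  choose g hg1 hg2 using hch
  refine ⟨b.attach.image (fun n => g n.1 n.2), ?_, ?_⟩
  · show (b.attach.image (fun n => g n.1 n.2)).image f ∈ H
    have : (b.attach.image (fun n => g n.1 n.2)).image f = b := by
      ext m
      simp only [Finset.image_image, Finset.mem_image, Finset.mem_attach, true_and,
        Function.comp_apply, Subtype.exists]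
      constructor
      · rintro ⟨n, hn, rfl⟩
        rw [hg2 n hn]; exact hn
      · intro hm
        exact ⟨m, hm, hg2 m hm⟩
    rw [this]; exact hbH
  · intro x hx
    simp only [Finset.coe_image, Set.mem_image, Finset.mem_coe, Finset.mem_attach] at hx
    obtain ⟨n, -, rfl⟩ := hx
    exact hg1 n.1 n.2
end

section
/- Let I and J be summable ideals on ω determined by weight functions μ and ν respectively, and suppose both are tall. Then there exists A ⊆ ω with A not in the dual filter J* such that I ≤_RB (J restricted to A), i.e., there is a finite-to-one function f : A → ω with, for all X ⊆ ω, X ∈ I iff f⁻¹[X] ∈ J ∩ P(A). -/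
/-!
Tallness of `J` forces `ν i → 0`, and once the weights are below `ε` the partial sums of `ν`
cannot jump over a window of width `ε`. Together with `∑ ν = ∞` this cuts `ω` into consecutive
finite intervals, gaps `Cₙ` and blocks `Bₙ`, with `ν(Cₙ) ≥ 1` and `μ(n) ≤ ν(Bₙ) ≤ μ(n) + 2⁻ⁿ`.
Sending `Bₙ` to `n` on `A = ⋃ Bₙ` gives `μ(X) ≤ ν(A ∩ f⁻¹X) ≤ μ(X) + 2`, while `ω \ A` contains
every `Cₙ` and so has infinite `ν`-mass.
-/

open scoped ENNReal

/-- The mass of a set of integers under a weight function. -/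
noncomputable def mass (μ : ℕ → ℝ≥0∞) (X : Set ℕ) : ℝ≥0∞ := ∑' i : X, μ i

/-- Membership in the summable ideal determined by `μ`. -/
def memSummable (μ : ℕ → ℝ≥0∞) (X : Set ℕ) : Prop := mass μ X < ⊤

/-- The summable ideal of `μ` is tall. -/
def TallSummable (μ : ℕ → ℝ≥0∞) : Prop :=
  ∀ A : Set ℕ, A.Infinite → ∃ B ⊆ A, B.Infinite ∧ memSummable μ B

open Set Filter Topology Function

section Mass

variable (ν : ℕ → ℝ≥0∞)

theorem mass_mono {X Y : Set ℕ} (h : X ⊆ Y) : mass ν X ≤ mass ν Y :=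
  ENNReal.tsum_mono_subtype ν h

theorem mass_Ico (a b : ℕ) : mass ν (Ico a b) = ∑ i ∈ Finset.Ico a b, ν i := by
  rw [← Finset.coe_Ico]
  exact Finset.tsum_subtype' _ ν

theorem mass_biUnion {B : ℕ → Set ℕ} (hB : Pairwise (Disjoint on B)) (X : Set ℕ) :
    mass ν (⋃ n ∈ X, B n) = ∑' n : X, mass ν (B n) :=
  ENNReal.tsum_biUnion' (hB.set_pairwise X)

variable {ν}

theorem not_memSummable_of_pairwise_disjoint {C : ℕ → Set ℕ} (hC : Pairwise (Disjoint on C))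
    {ε : ℝ≥0∞} (hε : ε ≠ 0) (hheavy : ∀ n, ε ≤ mass ν (C n)) {Y : Set ℕ} (hY : ∀ n, C n ⊆ Y) :
    ¬ memSummable ν Y := by
  have hunion : mass ν (⋃ n, C n) = ⊤ := by
    rw [mass, ENNReal.tsum_biUnion (hC.set_pairwise univ), eq_top_iff,
      ← ENNReal.tsum_const_eq_top_of_ne_zero (α := ℕ) hε]
    exact ENNReal.tsum_le_tsum hheavy
  rw [memSummable, not_lt, top_le_iff, eq_top_iff, ← hunion]
  exact mass_mono ν (iUnion_subset hY)

end Mass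

theorem TallSummable.tendsto_zero {ν : ℕ → ℝ≥0∞} (htall : TallSummable ν) :
    Tendsto ν atTop (𝓝 0) := by
  refine tendsto_order.2 ⟨fun a ha => absurd ha not_lt_zero, fun ε hε => ?_⟩
  by_contra hfreq
  rw [not_eventually, Nat.frequently_atTop_iff_infinite] at hfreq
  obtain ⟨B, hBsub, hBinf, hBsum⟩ := htall _ hfreq
  have : Infinite B := hBinf.to_subtype
  have hB : mass ν B = ⊤ := by
    rw [mass, eq_top_iff, ← ENNReal.tsum_const_eq_top_of_ne_zero (α := B) hε.ne']
    exact ENNReal.tsum_le_tsum fun i => not_lt.1 (hBsub i.2)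
  exact hBsum.ne hB

section Divergent

variable {ν : ℕ → ℝ≥0∞}

theorem exists_le_sum_Ico (hν : ∀ i, ν i ≠ ⊤) (hdiv : ∑' i, ν i = ⊤) (a : ℕ) {T : ℝ≥0∞}
    (hT : T ≠ ⊤) :
    ∃ b, a ≤ b ∧ T ≤ ∑ i ∈ Finset.Ico a b, ν i := by
  have hhead : ∑ i ∈ Finset.range a, ν i ≠ ⊤ := ENNReal.sum_ne_top.2 fun i _ => hν i
  have hlim := hdiv ▸ ENNReal.tendsto_nat_tsum ν
  obtain ⟨b, hb, hlt⟩ := ((eventually_ge_atTop a).and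
    ((tendsto_order.1 hlim).1 _ (ENNReal.add_lt_top.2 ⟨hhead.lt_top, hT.lt_top⟩))).exists
  refine ⟨b, hb, (ENNReal.add_le_add_iff_left hhead).1 ?_⟩
  rw [Finset.sum_range_add_sum_Ico _ hb]
  exact hlt.le

theorem exists_sum_Ico_mem_Icc (hν : ∀ i, ν i ≠ ⊤) (hdiv : ∑' i, ν i = ⊤) {a : ℕ} {ε : ℝ≥0∞}
    (hsmall : ∀ i, a ≤ i → ν i ≤ ε) {m : ℝ≥0∞} (hm : m ≠ ⊤) :
    ∃ b, a ≤ b ∧ m ≤ ∑ i ∈ Finset.Ico a b, ν i ∧ ∑ i ∈ Finset.Ico a b, ν i ≤ m + ε := by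
  classical
  have hex : ∃ k, m ≤ ∑ i ∈ Finset.Ico a (a + k), ν i := by
    obtain ⟨b, hab, hb⟩ := exists_le_sum_Ico hν hdiv a hm
    exact ⟨b - a, by rwa [Nat.add_sub_cancel' hab]⟩
  refine ⟨a + Nat.find hex, Nat.le_add_right _ _, Nat.find_spec hex, ?_⟩
  -- the first index where the partial sum reaches `m` overshoots it by a single weight
  rcases hk : Nat.find hex with _ | k
  · simp
  · have hbelow := Nat.find_min hex (show k < Nat.find hex by omega)
    rw [← add_assoc, Finset.sum_Ico_succ_top (Nat.le_add_right a k)]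
    exact add_le_add (not_le.1 hbelow).le (hsmall _ (Nat.le_add_right a k))

theorem exists_heavy_gap_then_block (hν : ∀ i, ν i ≠ ⊤) (hdiv : ∑' i, ν i = ⊤)
    (htall : TallSummable ν) (c : ℕ) {m : ℝ≥0∞} (hm : m ≠ ⊤) {ε : ℝ≥0∞} (hε : ε ≠ 0) :
    ∃ a b, c ≤ a ∧ a ≤ b ∧ 1 ≤ mass ν (Ico c a) ∧
      m ≤ mass ν (Ico a b) ∧ mass ν (Ico a b) ≤ m + ε := by
  obtain ⟨N, hN⟩ := eventually_atTop.1 ((tendsto_order.1 htall.tendsto_zero).2 ε hε.bot_lt)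
  obtain ⟨a, hca, hheavy⟩ := exists_le_sum_Ico hν hdiv (max c N) ENNReal.one_ne_top
  obtain ⟨b, hab, hwindow⟩ := exists_sum_Ico_mem_Icc hν hdiv
    (fun i hi => (hN i ((le_max_right c N).trans (hca.trans hi))).le) hm
  refine ⟨a, b, (le_max_left c N).trans hca, hab, ?_, ?_⟩
  · rw [mass_Ico]
    exact hheavy.trans
      (Finset.sum_le_sum_of_subset (Finset.Ico_subset_Ico_left (le_max_left c N)))
  · rwa [mass_Ico]

end Divergent

theorem exists_heavy_gaps_and_blocks {μ ν : ℕ → ℝ≥0∞} (hμ : ∀ n, μ n ≠ ⊤)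
    (hν : ∀ i, ν i ≠ ⊤) (hdiv : ∑' i, ν i = ⊤) (htall : TallSummable ν) :
    ∃ s a : ℕ → ℕ, Monotone s ∧ ∀ n, s n ≤ a n ∧ a n ≤ s (n + 1) ∧
      1 ≤ mass ν (Ico (s n) (a n)) ∧ μ n ≤ mass ν (Ico (a n) (s (n + 1))) ∧
        mass ν (Ico (a n) (s (n + 1))) ≤ μ n + 2⁻¹ ^ n := by
  choose a b h using fun n c =>
    exists_heavy_gap_then_block hν hdiv htall c (hμ n) (ε := 2⁻¹ ^ n) (by simp)
  let s : ℕ → ℕ := fun n => Nat.rec 0 (fun k sk => b k sk) n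
  exact ⟨s, fun n => a n (s n),
    monotone_nat_of_le_succ fun n => (h n (s n)).1.trans (h n (s n)).2.1, fun n => h n (s n)⟩

theorem Ico_subset_compl_iUnion_Ico {s a : ℕ → ℕ} (hs : Monotone s) (hsa : ∀ n, s n ≤ a n)
    (has : ∀ n, a n ≤ s (n + 1)) (n : ℕ) : Ico (s n) (a n) ⊆ (⋃ m, Ico (a m) (s (m + 1)))ᶜ := by
  intro i ⟨hsi, hia⟩ hi
  obtain ⟨m, ham, hism⟩ := mem_iUnion.1 hi
  rcases lt_trichotomy m n with hmn | rfl | hnm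
  · have := hs (show m + 1 ≤ n from hmn)
    omega
  · omega
  · have := hs (show n + 1 ≤ m from hnm)
    have := has n
    have := hsa m
    omega

section Blocks

open Classical in
noncomputable def blockIndex (B : ℕ → Set ℕ) (i : ℕ) : ℕ :=
  if h : ∃ n, i ∈ B n then Nat.find h else 0

variable {B : ℕ → Set ℕ}

theorem blockIndex_eq (hB : Pairwise (Disjoint on B)) {i n : ℕ} (hi : i ∈ B n) :
    blockIndex B i = n := by
  classical
  have h : ∃ n, i ∈ B n := ⟨n, hi⟩
  rw [blockIndex, dif_pos h]
  by_contra hne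
  exact disjoint_left.1 (hB hne) (Nat.find_spec h) hi

theorem iUnion_inter_preimage_blockIndex (hB : Pairwise (Disjoint on B)) (X : Set ℕ) :
    (⋃ n, B n) ∩ blockIndex B ⁻¹' X = ⋃ n ∈ X, B n := by
  ext i
  simp only [mem_inter_iff, mem_iUnion, mem_preimage, exists_prop]
  constructor
  · rintro ⟨⟨n, hi⟩, hX⟩
    exact ⟨n, blockIndex_eq hB hi ▸ hX, hi⟩
  · rintro ⟨n, hn, hi⟩
    exact ⟨⟨n, hi⟩, (blockIndex_eq hB hi).symm ▸ hn⟩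

theorem memSummable_iff_inter_preimage_blockIndex (hB : Pairwise (Disjoint on B))
    {μ ν δ : ℕ → ℝ≥0∞} (hlow : ∀ n, μ n ≤ mass ν (B n)) (hhigh : ∀ n, mass ν (B n) ≤ μ n + δ n)
    (hδ : ∑' n, δ n ≠ ⊤) (X : Set ℕ) :
    memSummable μ X ↔ memSummable ν ((⋃ n, B n) ∩ blockIndex B ⁻¹' X) := by
  rw [iUnion_inter_preimage_blockIndex hB, memSummable, memSummable, mass_biUnion ν hB]
  constructor
  · intro hX
    calc ∑' n : X, mass ν (B n) ≤ ∑' n : X, (μ n + δ n) := ENNReal.tsum_le_tsum fun n => hhigh n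
      _ = mass μ X + ∑' n : X, δ n := ENNReal.tsum_add
      _ ≤ mass μ X + ∑' n, δ n := by
        gcongr
        simpa only [mass, tsum_univ] using mass_mono δ (subset_univ X)
      _ < ⊤ := ENNReal.add_lt_top.2 ⟨hX, hδ.lt_top⟩
  · exact (ENNReal.tsum_le_tsum fun n : X => hlow n).trans_lt

end Blocks

theorem stmt6_general (μ ν : ℕ → ℝ≥0∞)
    (hμ1 : ∀ i, μ i ≠ ⊤) (hν1 : ∀ i, ν i ≠ ⊤)
    (hνdiv : mass ν Set.univ = ⊤)
    (hνtall : TallSummable ν) :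
    ∃ A : Set ℕ, ¬ memSummable ν Aᶜ ∧
      ∃ f : ℕ → ℕ, (∀ n : ℕ, (A ∩ f ⁻¹' {n}).Finite) ∧
        ∀ X : Set ℕ, memSummable μ X ↔ memSummable ν (A ∩ f ⁻¹' X) := by
  rw [mass, tsum_univ] at hνdiv
  obtain ⟨s, a, hs, h⟩ := exists_heavy_gaps_and_blocks hμ1 hν1 hνdiv hνtall
  choose hsa has hheavy hlow hhigh using h
  have hIco : Pairwise (Disjoint on fun n => Ico (s n) (s (n + 1))) :=
    hs.pairwise_disjoint_on_Ico_succ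
  have hB : Pairwise (Disjoint on fun n => Ico (a n) (s (n + 1))) := hIco.mono fun m n h =>
    h.mono (Ico_subset_Ico_left (hsa m)) (Ico_subset_Ico_left (hsa n))
  have hC : Pairwise (Disjoint on fun n => Ico (s n) (a n)) := hIco.mono fun m n h =>
    h.mono (Ico_subset_Ico_right (has m)) (Ico_subset_Ico_right (has n))
  refine ⟨⋃ n, Ico (a n) (s (n + 1)), not_memSummable_of_pairwise_disjoint hC one_ne_zero hheavy
    (Ico_subset_compl_iUnion_Ico hs hsa has), blockIndex _, fun n => ?_,
    memSummable_iff_inter_preimage_blockIndex hB hlow hhigh ?_⟩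
  · rw [iUnion_inter_preimage_blockIndex hB, biUnion_singleton]
    exact finite_Ico _ _
  · rw [ENNReal.tsum_geometric, ENNReal.one_sub_inv_two, inv_inv]
    exact ENNReal.ofNat_ne_top

/-- For tall summable ideals `I = fin(μ)` and `J = fin(ν)` there is a set `A`
with `ω \ A ∉ J` (i.e. `A ∉ J*`) and a finite-to-one map `f` on `A` witnessing
`I ≤_RB J ↾ A`. -/
theorem stmt6 (μ ν : ℕ → ℝ≥0∞)
    (hμ1 : ∀ i, μ i ≠ ⊤) (hν1 : ∀ i, ν i ≠ ⊤)
    (hμdiv : mass μ Set.univ = ⊤) (hνdiv : mass ν Set.univ = ⊤)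
    (hμtall : TallSummable μ) (hνtall : TallSummable ν) :
    ∃ A : Set ℕ, ¬ memSummable ν Aᶜ ∧
      ∃ f : ℕ → ℕ, (∀ n : ℕ, (A ∩ f ⁻¹' {n}).Finite) ∧
        ∀ X : Set ℕ, memSummable μ X ↔ memSummable ν (A ∩ f ⁻¹' X) :=
  stmt6_general μ ν hμ1 hν1 hνdiv hνtall
end

section
/- A countably generated filter F on ω (extending the Fréchet filter) is +-Ramsey. -/
/-- A set is `F`-positive: it meets every member of the filter. -/
def Pos (F : Filter ℕ) (X : Set ℕ) : Prop :=
  ∀ B ∈ F, (X ∩ B).Nonempty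

/-- An `F⁺`-tree on `ω^{<ω}`. -/
def IsPosTree (F : Filter ℕ) (T : Set (List ℕ)) : Prop :=
  [] ∈ T ∧ (∀ t ∈ T, ∀ s, s <+: t → s ∈ T) ∧
    ∀ t ∈ T, Pos F {i : ℕ | t ++ [i] ∈ T}

/-- `F` is +-Ramsey. -/
def PlusRamsey (F : Filter ℕ) : Prop :=
  ∀ T : Set (List ℕ), IsPosTree F T →
    ∃ b : ℕ → ℕ, (∀ n, (List.ofFn fun i : Fin n => b i) ∈ T) ∧ Pos F (Set.range b)

/-- Every countably generated filter on `ω` extending the Fréchet filter is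
+-Ramsey. -/
theorem stmt12 (F : Filter ℕ) [F.NeBot] (hF : F ≤ Filter.cofinite)
    [F.IsCountablyGenerated] : PlusRamsey F := by
  intro T hT
  obtain ⟨s, hsb⟩ := F.exists_antitone_basis
  have hsF : ∀ n, s n ∈ F := fun n => hsb.toHasBasis.mem_of_mem trivial
  have key : ∀ t, t ∈ T → ∀ n : ℕ, ∃ i, t ++ [i] ∈ T ∧ i ∈ s n := by
    intro t ht n
    obtain ⟨i, hi1, hi2⟩ := hT.2.2 t ht (s n) (hsF n)
    exact ⟨i, hi1, hi2⟩
  choose c hc1 hc2 using key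
  let l : ℕ → {t : List ℕ // t ∈ T} := fun n =>
    Nat.rec ⟨[], hT.1⟩ (fun n p => ⟨p.1 ++ [c p.1 p.2 n], hc1 p.1 p.2 n⟩) n
  let b : ℕ → ℕ := fun n => c (l n).1 (l n).2 n
  have hl : ∀ n, (l n).1 = (List.ofFn fun i : Fin n => b i) := by
    intro n
    induction n with
    | zero => rfl
    | succ n ih =>
      show (l n).1 ++ [b n] = _
      rw [List.ofFn_succ', ih]
      simp [List.concat_eq_append]
  refine ⟨b, fun n => ?_, fun B hB => ?_⟩
  · rw [← hl n]; exact (l n).2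
  · obtain ⟨n, -, hsub⟩ := hsb.toHasBasis.mem_iff.mp hB
    exact ⟨b n, ⟨n, rfl⟩, hsub (hc2 (l n).1 (l n).2 n)⟩
end
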